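/- For the cooperative TIAN scheme with two rounds, the minimization over f ∈ [r₁,1] in (eq. for d₁,TIAN^c(2)) yields: if r₁ ≥ β the value is [1 - (r₁+β)/2]⁺; if r₁ ≤ β/2 and β ≥ 1 the value is 2[1-r₁]⁺; if r₁ ≤ β/2 and β < 1 the value is [1-r₁]⁺ + [β-r₁]⁺; if β/2 < r₁ < β and r₁ > 1/2 the value is (1-r₁)β/r₁; and if β/2 < r₁ < β and r₁ ≤ 1/2 the value is [1-r₁]⁺ + [β-r₁]⁺. -/

import Mathlib

/-!
Write `phi12 r₁ β f` as a first term plus the penalty `1 - r₁ / f`, which is nonnegative on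
`[r₁, 1]` and vanishes at `f = r₁`. If `β ≤ r₁` the first term does not depend on `f`, so `f = r₁`
is optimal. If `r₁ < β` the first term is `min A (g f)` with `A = 1 + β - 2r₁` and
`g = phi12Branch r₁ β`, and the infimum is the least of `A` (attained at `f = r₁`), `2(1 - r₁)`
(at `f = 1`) and `(1 - r₁)β/r₁` (the branch `(1-f)β ≤ r₁` at `f = r₁`; when that branch is
inactive there, this candidate is dominated by the other two). On that branch
`g f + 1 - r₁/f ≥ 2 - β + (β - 2r₁)/f`, which is affine in `1/f`, hence bounded below by its
values at `f = 1` and `f = r₁`. On the other branch put `x = r₁/f ≤ 1` and `y = r₁/(1-f) < β`: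
then `r₁ = xy/(x+y)`, and `x² + y² ≤ max 1 β · (x + y)` gives `x + y ≤ max 1 β + 2r₁`, that is
`g f + 1 - r₁/f ≥ min A (2(1 - r₁))`.
-/

noncomputable def pos (x : ℝ) : ℝ := max x 0

noncomputable def phi12 (r₁ β : ℝ) (f : ℝ) : ℝ :=
  if β ≤ r₁ then pos (1 - (r₁ + β) / 2) + 1 - r₁ / f
  else if (1 - f) * β ≤ r₁ then
    min (pos (1 - r₁) + pos (β - r₁)) (pos (1 - (r₁ - (1 - f) * β) / f)) + 1 - r₁ / f
  else
    min (pos (1 - r₁) + pos (β - r₁)) (pos (1 + β - r₁ / (1 - f))) + 1 - r₁ / f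

lemma pos_of_nonneg {x : ℝ} (hx : 0 ≤ x) : pos x = x := max_eq_left hx

lemma add_le_add_two_mul_mul_div_add {x y c : ℝ} (hx : 0 < x) (hy : 0 < y) (hxc : x ≤ c)
    (hyc : y ≤ c) : x + y ≤ c + 2 * (x * y / (x + y)) := by
  have hsq : x ^ 2 + y ^ 2 ≤ c * (x + y) := by nlinarith
  have : x + y - c ≤ 2 * (x * y) / (x + y) := by
    rw [le_div_iff₀ (add_pos hx hy)]; linarith
  rw [mul_div_assoc']; linarith

section

variable {r₁ β f : ℝ}

lemma phi12_of_le (h : β ≤ r₁) (f : ℝ) :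
    phi12 r₁ β f = pos (1 - (r₁ + β) / 2) + (1 - r₁ / f) := by
  rw [phi12, if_pos h, add_sub_assoc]

noncomputable def phi12Branch (r₁ β f : ℝ) : ℝ :=
  if (1 - f) * β ≤ r₁ then pos (1 - (r₁ - (1 - f) * β) / f) else pos (1 + β - r₁ / (1 - f))

lemma phi12_of_lt (hr1 : r₁ ≤ 1) (h : r₁ < β) (f : ℝ) :
    phi12 r₁ β f = min (1 + β - 2 * r₁) (phi12Branch r₁ β f) + (1 - r₁ / f) := by
  have hA : pos (1 - r₁) + pos (β - r₁) = 1 + β - 2 * r₁ := by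
    rw [pos_of_nonneg (by linarith), pos_of_nonneg (by linarith)]; ring
  rw [phi12, if_neg h.not_ge, phi12Branch, hA]
  split_ifs <;> ring

lemma min_le_firstBranch (hr : 0 < r₁) (hf : r₁ ≤ f) (hf1 : f ≤ 1) :
    min (2 * (1 - r₁)) ((1 - r₁) * β / r₁) ≤ 1 - (r₁ - (1 - f) * β) / f + (1 - r₁ / f) := by
  have hf0 : 0 < f := hr.trans_le hf
  have hsum : 1 - (r₁ - (1 - f) * β) / f + (1 - r₁ / f) = 2 - β + (β - 2 * r₁) / f := by
    field_simp; ring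
  rw [hsum]
  rcases le_total (2 * r₁) β with h | h
  · have hdiv := le_div_self (sub_nonneg.2 h) hf0 hf1
    exact min_le_of_left_le (by linarith)
  · have hV : (1 - r₁) * β / r₁ = 2 - β + (β - 2 * r₁) / r₁ := by field_simp; ring
    have hdiv : (β - 2 * r₁) / r₁ ≤ (β - 2 * r₁) / f := by
      rw [div_le_div_iff₀ hr hf0]; nlinarith
    exact min_le_of_right_le (by linarith)

lemma min_le_secondBranch (hr : 0 < r₁) (hf : r₁ ≤ f) (hf1 : f ≤ 1) (h : r₁ < (1 - f) * β) :
    min (1 + β - 2 * r₁) (2 * (1 - r₁)) ≤ 1 + β - r₁ / (1 - f) + (1 - r₁ / f) := by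
  have hf0 : 0 < f := hr.trans_le hf
  have h1f : 0 < 1 - f := by
    rcases (sub_nonneg.2 hf1).lt_or_eq with h1f | h1f
    · exact h1f
    · rw [← h1f, zero_mul] at h; linarith
  have hx : r₁ / f ≤ max 1 β := (div_le_one_of_le₀ hf hf0.le).trans (le_max_left _ _)
  have hy : r₁ / (1 - f) ≤ max 1 β :=
    ((div_lt_iff₀ h1f).2 (by linarith)).le.trans (le_max_right _ _)
  have key := add_le_add_two_mul_mul_div_add (div_pos hr hf0) (div_pos hr h1f) hx hy
  have hharm : r₁ / f * (r₁ / (1 - f)) / (r₁ / f + r₁ / (1 - f)) = r₁ := by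
    field_simp; ring
  rw [hharm] at key
  rcases le_total β 1 with hβ | hβ
  · rw [max_eq_left hβ] at key
    exact min_le_of_left_le (by linarith)
  · rw [max_eq_right hβ] at key
    exact min_le_of_right_le (by linarith)

lemma le_phi12_of_lt (hr : 0 < r₁) (hr1 : r₁ ≤ 1) (h : r₁ < β) (hf : f ∈ Set.Icc r₁ 1) :
    min (min (1 + β - 2 * r₁) (2 * (1 - r₁))) ((1 - r₁) * β / r₁) ≤ phi12 r₁ β f := by
  have hpen : 0 ≤ 1 - r₁ / f := sub_nonneg.2 (div_le_one_of_le₀ hf.1 (hr.le.trans hf.1))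
  rw [phi12_of_lt hr1 h, ← min_add_add_right]
  refine le_min ((min_le_left _ _).trans ((min_le_left _ _).trans (by linarith))) ?_
  rw [phi12Branch]
  split_ifs with hreg
  · exact (min_le_min (min_le_right _ _) le_rfl).trans <|
      (min_le_firstBranch hr hf.1 hf.2).trans (add_le_add_left (le_max_left _ _) _)
  · exact (min_le_left _ _).trans <|
      (min_le_secondBranch hr hf.1 hf.2 (not_le.1 hreg)).trans (add_le_add_left (le_max_left _ _) _)

lemma min_le_of_lt_mul (hr : 0 < r₁) (h : r₁ < (1 - r₁) * β) :
    min (1 + β - 2 * r₁) (2 * (1 - r₁)) ≤ (1 - r₁) * β / r₁ := by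
  rcases le_total r₁ (1 / 2) with h2 | h2
  · refine min_le_of_left_le ?_
    rw [le_div_iff₀ hr]
    nlinarith [mul_nonneg (by linarith : (0 : ℝ) ≤ 1 - 2 * r₁) (by nlinarith : (0 : ℝ) ≤ β - r₁)]
  · refine min_le_of_right_le ?_
    rw [le_div_iff₀ hr]
    nlinarith

lemma sInf_phi12_of_le (hr : 0 < r₁) (hr1 : r₁ ≤ 1) (h : β ≤ r₁) :
    sInf (phi12 r₁ β '' Set.Icc r₁ 1) = pos (1 - (r₁ + β) / 2) := by
  refine IsLeast.csInf_eq ⟨⟨r₁, ⟨le_rfl, hr1⟩, ?_⟩, ?_⟩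
  · rw [phi12_of_le h, div_self hr.ne', sub_self, add_zero]
  · rintro _ ⟨f, hf, rfl⟩
    rw [phi12_of_le h]
    have := div_le_one_of_le₀ hf.1 (hr.le.trans hf.1)
    linarith

lemma sInf_phi12_of_lt (hr : 0 < r₁) (hr1 : r₁ ≤ 1) (h : r₁ < β) :
    sInf (phi12 r₁ β '' Set.Icc r₁ 1) =
      min (min (1 + β - 2 * r₁) (2 * (1 - r₁))) ((1 - r₁) * β / r₁) := by
  have hlow : ∀ y ∈ phi12 r₁ β '' Set.Icc r₁ 1,
      min (min (1 + β - 2 * r₁) (2 * (1 - r₁))) ((1 - r₁) * β / r₁) ≤ y := by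
    rintro _ ⟨f, hf, rfl⟩
    exact le_phi12_of_lt hr hr1 h hf
  have hle : ∀ f ∈ Set.Icc r₁ 1, sInf (phi12 r₁ β '' Set.Icc r₁ 1) ≤ phi12 r₁ β f :=
    fun f hf => csInf_le ⟨_, hlow⟩ (Set.mem_image_of_mem _ hf)
  have hat_r : sInf (phi12 r₁ β '' Set.Icc r₁ 1) ≤ min (1 + β - 2 * r₁) (phi12Branch r₁ β r₁) := by
    simpa [phi12_of_lt hr1 h, div_self hr.ne'] using hle r₁ ⟨le_rfl, hr1⟩
  have hat_one : sInf (phi12 r₁ β '' Set.Icc r₁ 1) ≤ 2 * (1 - r₁) := by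
    have hbranch : phi12Branch r₁ β 1 = 1 - r₁ := by
      rw [phi12Branch, if_pos (by linarith), sub_self, zero_mul, sub_zero, div_one,
        pos_of_nonneg (by linarith)]
    have := hle 1 ⟨hr1, le_rfl⟩
    rw [phi12_of_lt hr1 h, hbranch, div_one] at this
    linarith [min_le_right (1 + β - 2 * r₁) (1 - r₁)]
  have hAT : sInf (phi12 r₁ β '' Set.Icc r₁ 1) ≤ min (1 + β - 2 * r₁) (2 * (1 - r₁)) :=
    le_min (hat_r.trans (min_le_left _ _)) hat_one
  refine le_antisymm (le_min hAT ?_) (le_csInf ⟨_, Set.mem_image_of_mem _ ⟨hr1, le_rfl⟩⟩ hlow)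
  by_cases hreg : (1 - r₁) * β ≤ r₁
  · have hval : 1 - (r₁ - (1 - r₁) * β) / r₁ = (1 - r₁) * β / r₁ := by field_simp; ring
    have hV : 0 ≤ (1 - r₁) * β / r₁ :=
      div_nonneg (mul_nonneg (sub_nonneg.2 hr1) (hr.trans h).le) hr.le
    rw [phi12Branch, if_pos hreg, hval, pos_of_nonneg hV] at hat_r
    exact hat_r.trans (min_le_right _ _)
  · exact hAT.trans (min_le_of_lt_mul hr (not_le.1 hreg))
lemma min_candidates_eq (hr : 0 < r₁) (hr1 : r₁ ≤ 1) (h : r₁ < β) :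
    min (min (1 + β - 2 * r₁) (2 * (1 - r₁))) ((1 - r₁) * β / r₁) =
      if r₁ ≤ β / 2 then
        (if 1 ≤ β then 2 * pos (1 - r₁) else pos (1 - r₁) + pos (β - r₁))
      else if 1 / 2 < r₁ then (1 - r₁) * β / r₁
      else pos (1 - r₁) + pos (β - r₁) := by
  have hV_sub_T : (1 - r₁) * β / r₁ - 2 * (1 - r₁) = (1 - r₁) * (β - 2 * r₁) / r₁ := by
    field_simp
  have hV_sub_A : (1 - r₁) * β / r₁ - (1 + β - 2 * r₁) = (1 - 2 * r₁) * (β - r₁) / r₁ := by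
    field_simp; ring
  rw [pos_of_nonneg (sub_nonneg.2 hr1), pos_of_nonneg (sub_nonneg.2 h.le)]
  split_ifs with h2 h3 h3
  · have hTV := div_nonneg (mul_nonneg (sub_nonneg.2 hr1) (by linarith : 0 ≤ β - 2 * r₁)) hr.le
    rw [min_eq_right (by linarith : 2 * (1 - r₁) ≤ 1 + β - 2 * r₁)]
    exact min_eq_left (by linarith)
  · have hAV := div_nonneg (mul_nonneg (by linarith : 0 ≤ 1 - 2 * r₁) (sub_nonneg.2 h.le)) hr.le
    rw [min_eq_left (by linarith : 1 + β - 2 * r₁ ≤ 2 * (1 - r₁)), min_eq_left (by linarith)]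
    ring
  · have hVT := div_nonpos_of_nonpos_of_nonneg
      (mul_nonpos_of_nonneg_of_nonpos (sub_nonneg.2 hr1) (by linarith : β - 2 * r₁ ≤ 0)) hr.le
    have hVA := div_nonpos_of_nonpos_of_nonneg
      (mul_nonpos_of_nonpos_of_nonneg (by linarith : 1 - 2 * r₁ ≤ 0) (sub_nonneg.2 h.le)) hr.le
    exact min_eq_right (le_min (by linarith) (by linarith))
  · have hAV := div_nonneg (mul_nonneg (by linarith : 0 ≤ 1 - 2 * r₁) (sub_nonneg.2 h.le)) hr.le
    rw [min_eq_left (by linarith : 1 + β - 2 * r₁ ≤ 2 * (1 - r₁)), min_eq_left (by linarith)]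
    ring

end

theorem stmt12_general (r₁ β : ℝ) (hr : 0 < r₁) (hr1 : r₁ ≤ 1) :
    sInf (phi12 r₁ β '' Set.Icc r₁ 1) =
      if β ≤ r₁ then pos (1 - (r₁ + β) / 2)
      else if r₁ ≤ β / 2 then
        (if 1 ≤ β then 2 * pos (1 - r₁) else pos (1 - r₁) + pos (β - r₁))
      else if 1 / 2 < r₁ then (1 - r₁) * β / r₁
      else pos (1 - r₁) + pos (β - r₁) := by
  rcases le_or_gt β r₁ with h | h
  · rw [if_pos h, sInf_phi12_of_le hr hr1 h]
  · rw [if_neg h.not_ge, sInf_phi12_of_lt hr hr1 h, min_candidates_eq hr hr1 h]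

theorem stmt12 (r₁ β : ℝ) (hr : 0 < r₁) (hr1 : r₁ ≤ 1) (hβ : 0 < β) :
    sInf (phi12 r₁ β '' Set.Icc r₁ 1) =
      if β ≤ r₁ then pos (1 - (r₁ + β) / 2)
      else if r₁ ≤ β / 2 then
        (if 1 ≤ β then 2 * pos (1 - r₁) else pos (1 - r₁) + pos (β - r₁))
      else if 1 / 2 < r₁ then (1 - r₁) * β / r₁
      else pos (1 - r₁) + pos (β - r₁) :=
  stmt12_general r₁ β hr hr1
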